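/- Lemma 2.7 (estimate of I₃ for q ∈ (1,2]). Let n ≥ 1, q ∈ (1,2], s ∈ (0,1), κ ∈ [0,1), 1 ≤ ρ₁ < ρ₂ ≤ 2, an integer m ≥ 3, m₁ > 0 and H > 0. Set ρ̃ = (ρ₂ − ρ₁)/4 and ψ(x) = ((|x|² − ρ₁²)₊)^m. Let u : ℝⁿ → ℝ be measurable with |u(x) − u(y)| ≤ H|x − y|^κ for all x, y in the closed ball B̄_{ρ₂}(0). Let x̄ ∈ B_{(ρ₁+ρ₂)/2}(0) and ȳ ∈ B_{(3ρ₂+ρ₁)/4}(0) with ā := x̄ − ȳ satisfying 0 < |ā| < ρ̃/2, and assume (i) u(x̄+z) − u(ȳ+z) − m₁ψ(x̄+z) ≤ u(x̄) − u(ȳ) − m₁ψ(x̄) for all z ∈ ℝⁿ, and (ii) m₁ψ(x̄) ≤ u(x̄) − u(ȳ). Let ε₁ ∈ (0, 1/8), η = ε₁|ā|, and let D ⊆ B_{ρ̃}(0) \ B_η(0) be measurable. Then there is a constant κ* > 0, depending only on n, q, s, κ, m, m₁ and H (and not on ε₁, |ā| or D), such that ∫_D (J_q(u(x̄) − u(x̄+z))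 − J_q(u(ȳ) − u(ȳ+z))) |z|^{−(n+sq)} dz ≥ −κ* ( ∫_η^{ρ̃} r^{2(q−1)−sq−1} dr + |ā|^{κ(q−1)(m−1)/m} ∫_η^{ρ̃} r^{q−sq−2} dr ). -/

import Mathlib

open MeasureTheory Metric Filter

noncomputable section

/-- `J_q(t) = |t|^{q-2} t`. -/
def Jq (q t : ℝ) : ℝ := |t| ^ (q - 2) * t

/-- The localization function `ψ(x) = ((|x|² − ρ₁²)₊)^m`. -/
def locPsi (n : ℕ) (ρ₁ : ℝ) (m : ℕ) (x : EuclideanSpace ℝ (Fin n)) : ℝ :=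
  (max (‖x‖ ^ 2 - ρ₁ ^ 2) 0) ^ m

/-!
By the comparison inequality, `u(ȳ) - u(ȳ+z) - δ(z) ≤ u(x̄) - u(x̄+z)` with
`δ(z) = m₁ (ψ(x̄+z) - ψ(x̄))`, so monotonicity and `(q-1)`-Hölder continuity of `J_q` (`q ≤ 2`)
bound the numerator of the integrand below by `-2 |δ(z)|^(q-1)`. Hypothesis (ii) together with
the Hölder bound on `u` gives `((|x̄|² - ρ₁²)₊)^(m-1) ≲ |ā|^(κ(m-1)/m)`, hence
`|δ(z)| ≲ |ā|^(κ(m-1)/m) |z| + |z|²` for `|z| ≤ 1`. The resulting radial lower bound is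
integrated over the annulus `η ≤ |z| < ρ̃` in polar coordinates.
-/

section RealInequalities

variable {a b : ℝ}

theorem rpow_sub_rpow_le_rpow_sub {p : ℝ} (hp : 0 ≤ p) (hp1 : p ≤ 1) (ha : 0 ≤ a) (hab : a ≤ b) :
    b ^ p - a ^ p ≤ (b - a) ^ p := by
  have := Real.rpow_add_le_add_rpow (sub_nonneg.2 hab) ha hp hp1
  rw [sub_add_cancel] at this
  linarith

theorem pow_le_rpow_div_of_pow_le {w P : ℝ} {m : ℕ} (hw : 0 ≤ w) (hm : m ≠ 0) (h : w ^ m ≤ P)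
    (k : ℕ) : w ^ k ≤ P ^ ((k : ℝ) / m) := by
  calc w ^ k = (w ^ m) ^ ((k : ℝ) / m) := by
        rw [← Real.rpow_natCast w m, ← Real.rpow_mul hw, mul_div_cancel₀ _ (by exact_mod_cast hm),
          Real.rpow_natCast]
    _ ≤ P ^ ((k : ℝ) / m) := Real.rpow_le_rpow (by positivity) h (by positivity)

theorem abs_div_rpow_le {N c r a p : ℝ} (hr : 0 < r) (h : |N| ≤ c * r ^ a) :
    |N / r ^ p| ≤ c * r ^ (a - p) := by
  rw [abs_div, abs_of_pos (Real.rpow_pos_of_pos hr p), Real.rpow_sub hr, ← mul_div_assoc]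
  gcongr

theorem neg_le_div_rpow {N c₁ c₂ r a₁ a₂ p : ℝ} (hr : 0 < r)
    (h : -(c₁ * r ^ a₁ + c₂ * r ^ a₂) ≤ N) :
    -(c₁ * r ^ (a₁ - p) + c₂ * r ^ (a₂ - p)) ≤ N / r ^ p := by
  rw [le_div_iff₀ (Real.rpow_pos_of_pos hr p), Real.rpow_sub hr, Real.rpow_sub hr]
  refine le_of_eq_of_le ?_ h
  field_simp

end RealInequalities

section Jq

variable {q a b : ℝ}

theorem Jq_of_nonneg (hq : 1 < q) (ha : 0 ≤ a) : Jq q a = a ^ (q - 1) := by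
  rcases ha.eq_or_lt with rfl | ha
  · simp [Jq, Real.zero_rpow (by linarith : q - 1 ≠ 0)]
  · rw [Jq, abs_of_pos ha, ← Real.rpow_add_one ha.ne']
    ring_nf

theorem Jq_neg (q a : ℝ) : Jq q (-a) = -Jq q a := by
  simp [Jq]

theorem Jq_of_nonpos (hq : 1 < q) (ha : a ≤ 0) : Jq q a = -(-a) ^ (q - 1) := by
  rw [← Jq_of_nonneg hq (neg_nonneg.2 ha), Jq_neg, neg_neg]

theorem abs_Jq (hq : 1 < q) (a : ℝ) : |Jq q a| = |a| ^ (q - 1) := by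
  rcases le_total 0 a with ha | ha
  · rw [Jq_of_nonneg hq ha, abs_of_nonneg ha, abs_of_nonneg (Real.rpow_nonneg ha _)]
  · rw [Jq_of_nonpos hq ha, abs_neg, abs_of_nonpos ha,
      abs_of_nonneg (Real.rpow_nonneg (neg_nonneg.2 ha) _)]

@[fun_prop]
theorem measurable_Jq (q : ℝ) : Measurable (Jq q) :=
  (measurable_id.abs.pow_const _).mul measurable_id

theorem Jq_monotone (hq : 1 < q) : Monotone (Jq q) := by
  intro a b hab
  have hp : 0 ≤ q - 1 := by linarith
  rcases le_total 0 a with ha | ha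
  · rw [Jq_of_nonneg hq ha, Jq_of_nonneg hq (ha.trans hab)]
    exact Real.rpow_le_rpow ha hab hp
  rw [Jq_of_nonpos hq ha]
  rcases le_total 0 b with hb | hb
  · rw [Jq_of_nonneg hq hb]
    linarith [Real.rpow_nonneg (neg_nonneg.2 ha) (q - 1), Real.rpow_nonneg hb (q - 1)]
  · rw [Jq_of_nonpos hq hb, neg_le_neg_iff]
    exact Real.rpow_le_rpow (neg_nonneg.2 hb) (neg_le_neg hab) hp

theorem Jq_sub_Jq_le (hq : 1 < q) (hq2 : q ≤ 2) (hab : a ≤ b) :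
    Jq q b - Jq q a ≤ 2 * (b - a) ^ (q - 1) := by
  have hp : 0 ≤ q - 1 := by linarith
  have hp1 : q - 1 ≤ 1 := by linarith
  have hba : 0 ≤ (b - a) ^ (q - 1) := by positivity
  rcases le_total 0 a with ha | ha
  · rw [Jq_of_nonneg hq ha, Jq_of_nonneg hq (ha.trans hab)]
    linarith [rpow_sub_rpow_le_rpow_sub hp hp1 ha hab]
  rcases le_total 0 b with hb | hb
  · rw [Jq_of_nonpos hq ha, Jq_of_nonneg hq hb]
    linarith [Real.rpow_le_rpow hb (by linarith : b ≤ b - a) hp,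
      Real.rpow_le_rpow (neg_nonneg.2 ha) (by linarith : -a ≤ b - a) hp]
  · rw [Jq_of_nonpos hq ha, Jq_of_nonpos hq hb]
    have := rpow_sub_rpow_le_rpow_sub hp hp1 (neg_nonneg.2 hb) (neg_le_neg hab)
    rw [neg_sub_neg] at this
    linarith

theorem neg_le_Jq_sub_Jq {δ : ℝ} (hq : 1 < q) (hq2 : q ≤ 2) (hδ : 0 ≤ δ) (h : b - δ ≤ a) :
    -(2 * δ ^ (q - 1)) ≤ Jq q a - Jq q b := by
  have h1 := Jq_sub_Jq_le hq hq2 (by linarith : b - δ ≤ b)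
  rw [sub_sub_cancel] at h1
  linarith [Jq_monotone hq h]

theorem abs_Jq_sub_Jq_le {c : ℝ} (hq : 1 < q) (ha : |a| ≤ c) (hb : |b| ≤ c) :
    |Jq q a - Jq q b| ≤ 2 * c ^ (q - 1) := by
  have hp : 0 ≤ q - 1 := by linarith
  calc |Jq q a - Jq q b| ≤ |Jq q a| + |Jq q b| := abs_sub _ _
    _ ≤ c ^ (q - 1) + c ^ (q - 1) := by
      rw [abs_Jq hq, abs_Jq hq]
      gcongr
    _ = 2 * c ^ (q - 1) := by ring

end Jq

theorem abs_max_sq_sub_max_sq_le {E : Type*} [SeminormedAddCommGroup E] (x z : E) (c : ℝ) :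
    |max (‖x + z‖ ^ 2 - c) 0 - max (‖x‖ ^ 2 - c) 0| ≤ ‖z‖ * (2 * ‖x‖ + ‖z‖) := by
  refine (abs_max_sub_max_le_abs _ _ _).trans ?_
  have h₁ : |‖x + z‖ - ‖x‖| ≤ ‖z‖ := by simpa using abs_norm_sub_norm_le (x + z) x
  have h₂ : ‖x + z‖ + ‖x‖ ≤ 2 * ‖x‖ + ‖z‖ := by linarith [norm_add_le x z]
  calc |‖x + z‖ ^ 2 - c - (‖x‖ ^ 2 - c)| = |‖x + z‖ - ‖x‖| * (‖x + z‖ + ‖x‖) := by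
        rw [show ‖x + z‖ ^ 2 - c - (‖x‖ ^ 2 - c) = (‖x + z‖ - ‖x‖) * (‖x + z‖ + ‖x‖) by ring,
          abs_mul, abs_of_nonneg (by positivity : 0 ≤ ‖x + z‖ + ‖x‖)]
    _ ≤ ‖z‖ * (2 * ‖x‖ + ‖z‖) := by gcongr

theorem abs_locPsi_add_sub_le {n : ℕ} (ρ₁ : ℝ) (m : ℕ) {x z : EuclideanSpace ℝ (Fin n)}
    (hx : ‖x‖ ≤ 2) (hz : ‖z‖ ≤ 1) :
    |locPsi n ρ₁ m (x + z) - locPsi n ρ₁ m x| ≤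
      m * (max (‖x‖ ^ 2 - ρ₁ ^ 2) 0 + 5 * ‖z‖) ^ (m - 1) * (5 * ‖z‖) := by
  set w := max (‖x‖ ^ 2 - ρ₁ ^ 2) 0
  set w' := max (‖x + z‖ ^ 2 - ρ₁ ^ 2) 0
  have hw : 0 ≤ w := le_max_right _ _
  have hw' : 0 ≤ w' := le_max_right _ _
  have hdiff : |w' - w| ≤ 5 * ‖z‖ := by
    refine (abs_max_sq_sub_max_sq_le x z _).trans ?_
    nlinarith [norm_nonneg z]
  have hmax : max |w'| |w| ≤ w + 5 * ‖z‖ := by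
    rw [abs_of_nonneg hw, abs_of_nonneg hw']
    exact max_le (by linarith [le_abs_self (w' - w)]) (by linarith [norm_nonneg z])
  calc |w' ^ m - w ^ m| ≤ |w' - w| * m * max |w'| |w| ^ (m - 1) := abs_pow_sub_pow_le ..
    _ ≤ 5 * ‖z‖ * m * (w + 5 * ‖z‖) ^ (m - 1) := by gcongr
    _ = _ := by ring

theorem exists_mul_abs_locPsi_add_sub_le (n : ℕ) {m : ℕ} (hm : 2 ≤ m) {m₁ H : ℝ} (hm₁ : 0 < m₁)
    (hH : 0 ≤ H) (κ : ℝ) :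
    ∃ C > 0, ∀ (ρ₁ t : ℝ) (x z : EuclideanSpace ℝ (Fin n)), 0 ≤ t → ‖x‖ ≤ 2 → ‖z‖ ≤ 1 →
      m₁ * locPsi n ρ₁ m x ≤ H * t ^ κ →
      m₁ * |locPsi n ρ₁ m (x + z) - locPsi n ρ₁ m x| ≤
        C * (t ^ (κ * (m - 1) / m) * ‖z‖ + ‖z‖ ^ 2) := by
  set K₁ := (H / m₁) ^ (((m - 1 : ℕ) : ℝ) / m)
  set L := max K₁ (5 ^ (m - 1))
  have hL : 0 < L := lt_max_of_lt_right (by positivity)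
  refine ⟨m₁ * m * 2 ^ (m - 2) * 5 * L, by positivity, ?_⟩
  intro ρ₁ t x z ht hx hz hψ
  set w := max (‖x‖ ^ 2 - ρ₁ ^ 2) 0
  have hw : 0 ≤ w := le_max_right _ _
  have hwm : w ^ m ≤ H / m₁ * t ^ κ := by
    rw [div_mul_eq_mul_div, le_div_iff₀ hm₁, mul_comm]
    exact hψ
  have hwk : w ^ (m - 1) ≤ K₁ * t ^ (κ * (m - 1) / m) := by
    refine (pow_le_rpow_div_of_pow_le hw (by omega) hwm _).trans_eq ?_
    rw [Real.mul_rpow (div_nonneg hH hm₁.le) (Real.rpow_nonneg ht _), ← Real.rpow_mul ht]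
    congr 2
    rw [Nat.cast_sub (by omega : 1 ≤ m), Nat.cast_one, mul_div_assoc]
  have hzk : (5 * ‖z‖) ^ (m - 1) ≤ 5 ^ (m - 1) * ‖z‖ := by
    rw [mul_pow]
    gcongr
    exact pow_le_of_le_one (norm_nonneg z) hz (by omega)
  have hsplit : (w + 5 * ‖z‖) ^ (m - 1) ≤ 2 ^ (m - 2) * L * (t ^ (κ * (m - 1) / m) + ‖z‖) := by
    calc (w + 5 * ‖z‖) ^ (m - 1) ≤ 2 ^ (m - 1 - 1) * (w ^ (m - 1) + (5 * ‖z‖) ^ (m - 1)) :=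
          add_pow_le hw (by positivity) _
      _ ≤ 2 ^ (m - 2) * (K₁ * t ^ (κ * (m - 1) / m) + 5 ^ (m - 1) * ‖z‖) := by
          rw [Nat.sub_sub]
          gcongr
      _ ≤ 2 ^ (m - 2) * (L * t ^ (κ * (m - 1) / m) + L * ‖z‖) := by
          gcongr
          · exact le_max_left _ _
          · exact le_max_right _ _
      _ = 2 ^ (m - 2) * L * (t ^ (κ * (m - 1) / m) + ‖z‖) := by ring
  calc m₁ * |locPsi n ρ₁ m (x + z) - locPsi n ρ₁ m x|
      ≤ m₁ * (m * (w + 5 * ‖z‖) ^ (m - 1) * (5 * ‖z‖)) :=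
        mul_le_mul_of_nonneg_left (abs_locPsi_add_sub_le ρ₁ m hx hz) hm₁.le
    _ ≤ m₁ * (m * (2 ^ (m - 2) * L * (t ^ (κ * (m - 1) / m) + ‖z‖)) * (5 * ‖z‖)) := by
        gcongr
    _ = _ := by ring

theorem exists_neg_le_Jq_sub_Jq (n : ℕ) {q : ℝ} (hq : q ∈ Set.Ioc (1 : ℝ) 2) {m : ℕ} (hm : 2 ≤ m)
    {m₁ H : ℝ} (hm₁ : 0 < m₁) (hH : 0 ≤ H) (κ : ℝ) :
    ∃ K > 0, ∀ (ρ₁ : ℝ) (u : EuclideanSpace ℝ (Fin n) → ℝ) (xbar ybar z : EuclideanSpace ℝ (Fin n)),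
      ‖xbar‖ ≤ 2 → ‖z‖ ≤ 1 → u xbar - u ybar ≤ H * ‖xbar - ybar‖ ^ κ →
      u (xbar + z) - u (ybar + z) - m₁ * locPsi n ρ₁ m (xbar + z) ≤
        u xbar - u ybar - m₁ * locPsi n ρ₁ m xbar →
      m₁ * locPsi n ρ₁ m xbar ≤ u xbar - u ybar →
      -(K * ‖xbar - ybar‖ ^ (κ * (q - 1) * (m - 1) / m) * ‖z‖ ^ (q - 1) +
          K * ‖z‖ ^ (2 * (q - 1))) ≤
        Jq q (u xbar - u (xbar + z)) - Jq q (u ybar - u (ybar + z)) := by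
  obtain ⟨hq1, hq2⟩ := hq
  have hp : 0 ≤ q - 1 := by linarith
  obtain ⟨C, hC, hψ⟩ := exists_mul_abs_locPsi_add_sub_le n hm hm₁ hH κ
  refine ⟨2 * C ^ (q - 1), by positivity, ?_⟩
  intro ρ₁ u xbar ybar z hx hz hxy hcomp hpsi
  set t := ‖xbar - ybar‖
  set a := t ^ (κ * (m - 1) / m) * ‖z‖
  have ha : 0 ≤ a := by positivity
  have hψ' := hψ ρ₁ t xbar z (norm_nonneg _) hx hz (hpsi.trans hxy)
  have hshift : u ybar - u (ybar + z) - C * (a + ‖z‖ ^ 2) ≤ u xbar - u (xbar + z) := by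
    have := mul_le_mul_of_nonneg_left
      (le_abs_self (locPsi n ρ₁ m (xbar + z) - locPsi n ρ₁ m xbar)) hm₁.le
    linarith
  refine le_trans ?_ (neg_le_Jq_sub_Jq hq1 hq2 (by positivity) hshift)
  have hsplit : (C * (a + ‖z‖ ^ 2)) ^ (q - 1) ≤
      C ^ (q - 1) * (t ^ (κ * (q - 1) * (m - 1) / m) * ‖z‖ ^ (q - 1) + ‖z‖ ^ (2 * (q - 1))) := by
    rw [Real.mul_rpow hC.le (by positivity)]
    gcongr
    refine (Real.rpow_add_le_add_rpow ha (by positivity) hp (by linarith)).trans_eq ?_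
    rw [Real.mul_rpow (by positivity) (norm_nonneg z), ← Real.rpow_mul (norm_nonneg _),
      ← Real.rpow_natCast, ← Real.rpow_mul (norm_nonneg _), Nat.cast_ofNat]
    congr 3
    ring
  linarith

section Annulus

variable {E : Type*} [NormedAddCommGroup E] [NormedSpace ℝ E] [FiniteDimensional ℝ E]
  [MeasurableSpace E] [BorelSpace E] (μ : Measure E) [μ.IsAddHaarMeasure] {η ρ : ℝ}

theorem integrableOn_annulus_rpow_norm (hη : 0 < η) (e : ℝ) :
    IntegrableOn (fun z : E => ‖z‖ ^ e) (ball 0 ρ \ ball 0 η) μ := by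
  have hK : IsCompact (closedBall (0 : E) ρ \ ball 0 η) :=
    (isCompact_closedBall 0 ρ).diff isOpen_ball
  refine (ContinuousOn.integrableOn_compact hK ?_).mono_set
    (Set.sdiff_subset_sdiff_left ball_subset_closedBall)
  refine continuous_norm.continuousOn.rpow_const fun z hz => Or.inl ?_
  have : η ≤ ‖z‖ := by simpa using hz.2
  exact (hη.trans_le this).ne'

theorem setIntegral_annulus_rpow_norm [Nontrivial E] (hη : 0 < η) (hηρ : η ≤ ρ) (e : ℝ) :
    ∫ z in ball 0 ρ \ ball 0 η, ‖z‖ ^ e ∂μ =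
      Module.finrank ℝ E * μ.real (ball 0 1) *
        ∫ r in η..ρ, r ^ ((Module.finrank ℝ E : ℝ) - 1 + e) := by
  let d := Module.finrank ℝ E
  have hd : 1 ≤ d := Module.finrank_pos
  have hF : (ball (0 : E) ρ \ ball 0 η).indicator (fun z => ‖z‖ ^ e) =
      fun z => (Set.Ico η ρ).indicator (fun r => r ^ e) ‖z‖ := by
    ext z
    simp [Set.indicator, and_comm]
  have hpow : Set.EqOn (fun r : ℝ => r ^ (d - 1) • r ^ e) (fun r => r ^ ((d : ℝ) - 1 + e))
      (Set.Ioc η ρ) := fun r hr => by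
    dsimp only
    rw [smul_eq_mul, Real.rpow_add (hη.trans hr.1), ← Real.rpow_natCast, Nat.cast_sub hd,
      Nat.cast_one]
  rw [← integral_indicator (measurableSet_ball.diff measurableSet_ball), hF,
    integral_fun_norm_addHaar μ, nsmul_eq_mul, smul_eq_mul, mul_assoc]
  congr 2
  rw [← Set.indicator_smul (Set.Ico η ρ) (fun r : ℝ => r ^ (d - 1)),
    setIntegral_indicator measurableSet_Ico,
    Set.inter_eq_right.2 (show Set.Ico η ρ ⊆ Set.Ioi 0 from fun r hr => hη.trans_le hr.1),
    integral_Ico_eq_integral_Ioo, ← integral_Ioc_eq_integral_Ioo,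
    intervalIntegral.integral_of_le hηρ,
    setIntegral_congr_fun measurableSet_Ioc hpow]

theorem integrableOn_of_abs_le_rpow_norm {D : Set E} {g : E → ℝ} {c e : ℝ} (hη : 0 < η)
    (hDA : D ⊆ ball 0 ρ \ ball 0 η) (hD : MeasurableSet D) (hg : AEStronglyMeasurable g μ)
    (hbound : ∀ z ∈ D, |g z| ≤ c * ‖z‖ ^ e) : IntegrableOn g D μ :=
  Integrable.mono' (((integrableOn_annulus_rpow_norm μ hη e).mono_set hDA).const_mul c) hg.restrict
    ((ae_restrict_iff' hD).2 (ae_of_all _ hbound))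

theorem neg_le_setIntegral_of_neg_rpow_norm_le [Nontrivial E] {D : Set E} {g : E → ℝ}
    {c₁ c₂ e₁ e₂ : ℝ} (hη : 0 < η) (hηρ : η ≤ ρ) (hDA : D ⊆ ball 0 ρ \ ball 0 η)
    (hD : MeasurableSet D) (hg : IntegrableOn g D μ) (hc₁ : 0 ≤ c₁) (hc₂ : 0 ≤ c₂)
    (hlow : ∀ z ∈ D, -(c₁ * ‖z‖ ^ e₁ + c₂ * ‖z‖ ^ e₂) ≤ g z) :
    -(Module.finrank ℝ E * μ.real (ball 0 1) *
        (c₁ * (∫ r in η..ρ, r ^ ((Module.finrank ℝ E : ℝ) - 1 + e₁)) +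
          c₂ * ∫ r in η..ρ, r ^ ((Module.finrank ℝ E : ℝ) - 1 + e₂))) ≤ ∫ z in D, g z ∂μ := by
  set h : E → ℝ := fun z => c₁ * ‖z‖ ^ e₁ + c₂ * ‖z‖ ^ e₂
  have hh : IntegrableOn h (ball 0 ρ \ ball 0 η) μ :=
    ((integrableOn_annulus_rpow_norm μ hη e₁).const_mul c₁).add
      ((integrableOn_annulus_rpow_norm μ hη e₂).const_mul c₂)
  calc _ = -∫ z in ball 0 ρ \ ball 0 η, h z ∂μ := by
        rw [integral_add ((integrableOn_annulus_rpow_norm μ hη e₁).const_mul c₁)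
            ((integrableOn_annulus_rpow_norm μ hη e₂).const_mul c₂),
          integral_const_mul, integral_const_mul, setIntegral_annulus_rpow_norm μ hη hηρ,
          setIntegral_annulus_rpow_norm μ hη hηρ]
        ring
    _ ≤ -∫ z in D, h z ∂μ :=
        neg_le_neg (setIntegral_mono_set hh (ae_of_all _ fun z => by positivity) hDA.eventuallyLE)
    _ = ∫ z in D, -h z ∂μ := (integral_neg _).symm
    _ ≤ ∫ z in D, g z ∂μ := setIntegral_mono_on (hh.mono_set hDA).neg hg hD hlow

theorem integrableOn_Jq_sub_Jq_div_rpow_norm {q H κ p : ℝ} {D : Set E} {u : E → ℝ} {x y : E}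
    (hq : 1 < q) (hH : 0 ≤ H) (hu : Measurable u) (hη : 0 < η) (hDA : D ⊆ ball 0 ρ \ ball 0 η)
    (hD : MeasurableSet D) (hx : ∀ z ∈ D, |u x - u (x + z)| ≤ H * ‖z‖ ^ κ)
    (hy : ∀ z ∈ D, |u y - u (y + z)| ≤ H * ‖z‖ ^ κ) :
    IntegrableOn (fun z => (Jq q (u x - u (x + z)) - Jq q (u y - u (y + z))) / ‖z‖ ^ p) D μ := by
  refine integrableOn_of_abs_le_rpow_norm (c := 2 * H ^ (q - 1)) (e := κ * (q - 1) - p) μ hη hDA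
    hD (Measurable.aestronglyMeasurable (by fun_prop)) fun z hz => ?_
  have hz0 : 0 < ‖z‖ := hη.trans_le (by simpa using (hDA hz).2)
  have hN := abs_Jq_sub_Jq_le hq (hx z hz) (hy z hz)
  rw [Real.mul_rpow hH (by positivity), ← Real.rpow_mul hz0.le, ← mul_assoc] at hN
  exact abs_div_rpow_le hz0 hN

end Annulus

theorem I3_estimate_q_le_two_general
    (n : ℕ) (hn : 1 ≤ n) (q s κ : ℝ) (m : ℕ) (m₁ H : ℝ)
    (hq : q ∈ Set.Ioc (1 : ℝ) 2)
    (hm : 3 ≤ m) (hm₁ : 0 < m₁) (hH : 0 < H) :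
    ∃ κs > (0 : ℝ), ∀ ρ₁ ρ₂ : ℝ, 1 ≤ ρ₁ → ρ₁ < ρ₂ → ρ₂ ≤ 2 →
      ∀ u : EuclideanSpace ℝ (Fin n) → ℝ, Measurable u →
      (∀ x ∈ closedBall (0 : EuclideanSpace ℝ (Fin n)) ρ₂,
        ∀ y ∈ closedBall (0 : EuclideanSpace ℝ (Fin n)) ρ₂,
          |u x - u y| ≤ H * ‖x - y‖ ^ κ) →
      ∀ xbar ∈ ball (0 : EuclideanSpace ℝ (Fin n)) ((ρ₁ + ρ₂) / 2),
      ∀ ybar ∈ ball (0 : EuclideanSpace ℝ (Fin n)) ((3 * ρ₂ + ρ₁) / 4),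
        xbar - ybar ≠ 0 → ‖xbar - ybar‖ < (ρ₂ - ρ₁) / 8 →
        (∀ z : EuclideanSpace ℝ (Fin n),
          u (xbar + z) - u (ybar + z) - m₁ * locPsi n ρ₁ m (xbar + z) ≤
            u xbar - u ybar - m₁ * locPsi n ρ₁ m xbar) →
        m₁ * locPsi n ρ₁ m xbar ≤ u xbar - u ybar →
        ∀ ε₁ ∈ Set.Ioo (0 : ℝ) (1 / 8),
        ∀ D : Set (EuclideanSpace ℝ (Fin n)), MeasurableSet D →
          D ⊆ ball (0 : EuclideanSpace ℝ (Fin n)) ((ρ₂ - ρ₁) / 4) \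
                ball (0 : EuclideanSpace ℝ (Fin n)) (ε₁ * ‖xbar - ybar‖) →
          IntegrableOn (fun z =>
              (Jq q (u xbar - u (xbar + z)) - Jq q (u ybar - u (ybar + z))) /
                ‖z‖ ^ ((n : ℝ) + s * q)) D ∧
          -(κs * ((∫ r in (ε₁ * ‖xbar - ybar‖)..((ρ₂ - ρ₁) / 4),
                r ^ (2 * (q - 1) - s * q - 1)) +
              ‖xbar - ybar‖ ^ (κ * (q - 1) * ((m : ℝ) - 1) / (m : ℝ)) *
                ∫ r in (ε₁ * ‖xbar - ybar‖)..((ρ₂ - ρ₁) / 4),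
                  r ^ (q - s * q - 2)))
            ≤ ∫ z in D,
                (Jq q (u xbar - u (xbar + z)) - Jq q (u ybar - u (ybar + z))) /
                  ‖z‖ ^ ((n : ℝ) + s * q) := by
  have hdim : Module.finrank ℝ (EuclideanSpace ℝ (Fin n)) = n := finrank_euclideanSpace_fin
  have : Nontrivial (EuclideanSpace ℝ (Fin n)) :=
    Module.nontrivial_of_finrank_pos (R := ℝ) (by rw [hdim]; omega)
  obtain ⟨K, hK, hJ⟩ := exists_neg_le_Jq_sub_Jq n hq (show 2 ≤ m by omega) hm₁ hH.le κ
  set C := (n : ℝ) * volume.real (ball (0 : EuclideanSpace ℝ (Fin n)) 1)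
  have hC : 0 < C := mul_pos (by exact_mod_cast hn)
    (ENNReal.toReal_pos (measure_ball_pos _ _ one_pos).ne' measure_ball_lt_top.ne)
  refine ⟨K * C, by positivity, ?_⟩
  intro ρ₁ ρ₂ hρ₁ hρ₁₂ hρ₂ u hu hHol xbar hxbar ybar hybar hne hsmall hcomp hpsi ε₁ hε₁ D hD hDsub
  obtain ⟨hε₁0, hε₁8⟩ := hε₁
  set p := (n : ℝ) + s * q with hp
  set η := ε₁ * ‖xbar - ybar‖
  have hη : 0 < η := mul_pos hε₁0 (norm_pos_iff.2 hne)
  have hηρ : η ≤ (ρ₂ - ρ₁) / 4 := by nlinarith [norm_nonneg (xbar - ybar)]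
  have hx : ‖xbar‖ < (ρ₁ + ρ₂) / 2 := mem_ball_zero_iff.1 hxbar
  have hy : ‖ybar‖ < (3 * ρ₂ + ρ₁) / 4 := mem_ball_zero_iff.1 hybar
  have hzD : ∀ z ∈ D, 0 < ‖z‖ ∧ ‖z‖ < (ρ₂ - ρ₁) / 4 := fun z hz =>
    ⟨hη.trans_le (by simpa using (hDsub hz).2), by simpa using (hDsub hz).1⟩
  have hosc : ∀ w : EuclideanSpace ℝ (Fin n), ‖w‖ ≤ (3 * ρ₂ + ρ₁) / 4 →
      ∀ z ∈ D, |u w - u (w + z)| ≤ H * ‖z‖ ^ κ := fun w hw z hz => by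
    have hz := (hzD z hz).2
    simpa using hHol w (mem_closedBall_zero_iff.2 (by linarith))
      (w + z) (mem_closedBall_zero_iff.2 (by linarith [norm_add_le w z]))
  have hxy : u xbar - u ybar ≤ H * ‖xbar - ybar‖ ^ κ :=
    (le_abs_self _).trans (hHol xbar (mem_closedBall_zero_iff.2 (by linarith))
      ybar (mem_closedBall_zero_iff.2 (by linarith)))
  have hint := integrableOn_Jq_sub_Jq_div_rpow_norm volume (p := p) hq.1 hH.le hu hη hDsub hD
    (hosc xbar (by linarith)) (hosc ybar hy.le)
  refine ⟨hint, ?_⟩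
  convert neg_le_setIntegral_of_neg_rpow_norm_le volume hη hηρ hDsub hD hint (by positivity)
    hK.le fun z hz => neg_le_div_rpow (hzD z hz).1
      (hJ ρ₁ u xbar ybar z (by linarith) (by linarith [(hzD z hz).2]) hxy (hcomp z) hpsi) using 2
  rw [hdim, show (n : ℝ) - 1 + (q - 1 - p) = q - s * q - 2 by rw [hp]; ring,
    show (n : ℝ) - 1 + (2 * (q - 1) - p) = 2 * (q - 1) - s * q - 1 by rw [hp]; ring]
  ring

/-- **Lemma 2.7** (estimate of `I₃` for `q ∈ (1,2]`). -/
theorem I3_estimate_q_le_two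
    (n : ℕ) (hn : 1 ≤ n) (q s κ : ℝ) (m : ℕ) (m₁ H : ℝ)
    (hq : q ∈ Set.Ioc (1 : ℝ) 2) (hs : s ∈ Set.Ioo (0 : ℝ) 1) (hκ : κ ∈ Set.Ico (0 : ℝ) 1)
    (hm : 3 ≤ m) (hm₁ : 0 < m₁) (hH : 0 < H) :
    ∃ κs > (0 : ℝ), ∀ ρ₁ ρ₂ : ℝ, 1 ≤ ρ₁ → ρ₁ < ρ₂ → ρ₂ ≤ 2 →
      ∀ u : EuclideanSpace ℝ (Fin n) → ℝ, Measurable u →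
      (∀ x ∈ closedBall (0 : EuclideanSpace ℝ (Fin n)) ρ₂,
        ∀ y ∈ closedBall (0 : EuclideanSpace ℝ (Fin n)) ρ₂,
          |u x - u y| ≤ H * ‖x - y‖ ^ κ) →
      ∀ xbar ∈ ball (0 : EuclideanSpace ℝ (Fin n)) ((ρ₁ + ρ₂) / 2),
      ∀ ybar ∈ ball (0 : EuclideanSpace ℝ (Fin n)) ((3 * ρ₂ + ρ₁) / 4),
        xbar - ybar ≠ 0 → ‖xbar - ybar‖ < (ρ₂ - ρ₁) / 8 →
        (∀ z : EuclideanSpace ℝ (Fin n),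
          u (xbar + z) - u (ybar + z) - m₁ * locPsi n ρ₁ m (xbar + z) ≤
            u xbar - u ybar - m₁ * locPsi n ρ₁ m xbar) →
        m₁ * locPsi n ρ₁ m xbar ≤ u xbar - u ybar →
        ∀ ε₁ ∈ Set.Ioo (0 : ℝ) (1 / 8),
        ∀ D : Set (EuclideanSpace ℝ (Fin n)), MeasurableSet D →
          D ⊆ ball (0 : EuclideanSpace ℝ (Fin n)) ((ρ₂ - ρ₁) / 4) \
                ball (0 : EuclideanSpace ℝ (Fin n)) (ε₁ * ‖xbar - ybar‖) →
          IntegrableOn (fun z =>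
              (Jq q (u xbar - u (xbar + z)) - Jq q (u ybar - u (ybar + z))) /
                ‖z‖ ^ ((n : ℝ) + s * q)) D ∧
          -(κs * ((∫ r in (ε₁ * ‖xbar - ybar‖)..((ρ₂ - ρ₁) / 4),
                r ^ (2 * (q - 1) - s * q - 1)) +
              ‖xbar - ybar‖ ^ (κ * (q - 1) * ((m : ℝ) - 1) / (m : ℝ)) *
                ∫ r in (ε₁ * ‖xbar - ybar‖)..((ρ₂ - ρ₁) / 4),
                  r ^ (q - s * q - 2)))
            ≤ ∫ z in D,
                (Jq q (u xbar - u (xbar + z)) - Jq q (u ybar - u (ybar + z))) /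
                  ‖z‖ ^ ((n : ℝ) + s * q) :=
  I3_estimate_q_le_two_general n hn q s κ m m₁ H hq hm hm₁ hH
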